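/- Let λ ∈ ℂ with λ ≠ 0. For d1, d2 ∈ ℕ define c d1 d2 = (1/((2d1+1)!·(2d2+1)!)) · iteratedDeriv (2d2+1) (fun u2 : ℂ => iteratedDeriv (2d1+1) (fun u1 : ℂ => u1^2 * u2^2 * (-u1 - u2)^((2*(d1:ℤ)+2*(d2:ℤ)-2)) ) λ) λ, the iterated residue at (u1,u2)=(λ,λ) of u1^2u2^2(-u1-u2)^{2(d1+d2-1)}/((u1-λ)^{2(d1+1)}(u2-λ)^{2(d2+1)}). Then for all z1, z2 ∈ ℂ with |z1| < 1/100 and |z2| < 1/100, HasSum (fun p : ℕ × ℕ => z1^p.1 * z2^p.2 * c p.1 p.2) ((3 - 6*(z1+z2) + 3*z1^2 + 10*z1*z2 + 3*z2^2) / (8*(1 - 2*(z1+z2) + (z1-z2)^2))). -/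

import Mathlib

/-!
For `(d₁, d₂) ≠ (0, 0)` the exponent `2(d₁+d₂) - 2` is a natural number, so the integrand
`u₁² u₂² (u₁ + u₂) ^ (2(d₁+d₂) - 2)` is a homogeneous polynomial of degree `(2d₁+1) + (2d₂+1)`.
Its mixed derivative of exactly that order is constant, equal to `(2d₁+1)! (2d₂+1)!` times the
coefficient of `u₁ ^ (2d₁+1) u₂ ^ (2d₂+1)`, i.e. `choose (2(d₁+d₂) - 2) (2d₁ - 1)`; in particular
`λ` drops out. The one rational case `c 0 0 = 6λ⁴ / (2λ)⁴ = 3/8` is computed by hand.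
Writing `z₁ = s²`, `z₂ = t²`, the remaining series is `s t` times the odd–odd part of
`∑ choose (i+j) i sⁱ tʲ = 1 / (1 - s - t)`, and the four-fold sign average of `1 / (1 - s - t)` has
denominator `∏ (1 ± s ± t) = 1 - 2(z₁ + z₂) + (z₁ - z₂)²`.
-/

open scoped Nat
open Finset

section IteratedDeriv

variable {𝕜 : Type*} [NontriviallyNormedField 𝕜]

theorem iteratedDeriv_sum_mul_pow {ι : Type*} (s : Finset ι) (a : ι → 𝕜) (e : ι → ℕ)
    (n : ℕ) (x : 𝕜) :
    iteratedDeriv n (fun u => ∑ i ∈ s, a i * u ^ e i) x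
      = ∑ i ∈ s, a i * ((e i).descFactorial n * x ^ (e i - n)) := by
  rw [iteratedDeriv_fun_sum fun i _ => by fun_prop]
  simp only [iteratedDeriv_const_mul_field, iteratedDeriv_pow]

theorem descFactorial_mul_descFactorial_of_add_eq {e₁ e₂ n₁ n₂ : ℕ} (h : e₁ + e₂ = n₁ + n₂)
    (x y : 𝕜) :
    (e₁.descFactorial n₁ * x ^ (e₁ - n₁)) * (e₂.descFactorial n₂ * y ^ (e₂ - n₂))
      = if e₁ = n₁ then (n₁ ! * n₂ ! : 𝕜) else 0 := by
  rcases lt_trichotomy e₁ n₁ with h₁ | rfl | h₁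
  · simp [Nat.descFactorial_eq_zero_iff_lt.mpr h₁, h₁.ne]
  · obtain rfl : e₂ = n₂ := by omega
    simp [Nat.descFactorial_self]
  · simp [Nat.descFactorial_eq_zero_iff_lt.mpr (show e₂ < n₂ by omega), h₁.ne']

theorem iteratedDeriv_iteratedDeriv_homogeneous {ι : Type*} (s : Finset ι) (a : ι → 𝕜)
    (e₁ e₂ : ι → ℕ) {n₁ n₂ : ℕ} (h : ∀ i ∈ s, e₁ i + e₂ i = n₁ + n₂) (x y : 𝕜) :
    iteratedDeriv n₂ (fun v => iteratedDeriv n₁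
        (fun u => ∑ i ∈ s, a i * u ^ e₁ i * v ^ e₂ i) x) y
      = n₁ ! * n₂ ! * ∑ i ∈ s with e₁ i = n₁, a i := by
  have inner : ∀ v : 𝕜, iteratedDeriv n₁ (fun u => ∑ i ∈ s, a i * u ^ e₁ i * v ^ e₂ i) x
      = ∑ i ∈ s, (a i * ((e₁ i).descFactorial n₁ * x ^ (e₁ i - n₁))) * v ^ e₂ i := by
    intro v
    simp_rw [mul_right_comm _ _ (v ^ _)]
    exact iteratedDeriv_sum_mul_pow s _ e₁ n₁ x
  simp_rw [inner, iteratedDeriv_sum_mul_pow, sum_filter, mul_sum]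
  refine sum_congr rfl fun i hi => ?_
  rw [mul_assoc, descFactorial_mul_descFactorial_of_add_eq (h i hi)]
  split_ifs <;> ring

end IteratedDeriv

section BinomialSeries

theorem hasSum_antidiagonal_choose_mul_pow_mul_pow {R : Type*} [CommSemiring R]
    [TopologicalSpace R] (a b : R) (n : ℕ) :
    HasSum (fun p : antidiagonal n => ((p.1.1 + p.1.2).choose p.1.1 : R) * a ^ p.1.1 * b ^ p.1.2)
      ((a + b) ^ n) := by
  have hsum : ∑ p ∈ antidiagonal n, ((p.1 + p.2).choose p.1 : R) * a ^ p.1 * b ^ p.2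
      = (a + b) ^ n := by
    rw [(Commute.all a b).add_pow']
    refine sum_congr rfl fun p hp => ?_
    rw [mem_antidiagonal.mp hp, nsmul_eq_mul, mul_assoc]
  exact hsum ▸ (antidiagonal n).hasSum _

variable {𝕜 : Type*} [RCLike 𝕜]

theorem hasSum_choose_mul_pow_mul_pow {x y : 𝕜} (h : ‖x‖ + ‖y‖ < 1) :
    HasSum (fun p : ℕ × ℕ => ((p.1 + p.2).choose p.1 : 𝕜) * x ^ p.1 * y ^ p.2)
      (1 - (x + y))⁻¹ := by
  set f := fun p : ℕ × ℕ => ((p.1 + p.2).choose p.1 : 𝕜) * x ^ p.1 * y ^ p.2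
  let e := HasAntidiagonal.sigmaAntidiagonalEquivProd (A := ℕ)
  have hnorm : ∀ n, HasSum (fun q : antidiagonal n => ‖f (e ⟨n, q⟩)‖) ((‖x‖ + ‖y‖) ^ n) :=
    fun n => by
      simpa [f, e, norm_mul, norm_pow] using hasSum_antidiagonal_choose_mul_pow_mul_pow ‖x‖ ‖y‖ n
  have hsummable : Summable (f ∘ e) := by
    refine Summable.of_norm ((summable_sigma_of_nonneg fun _ => norm_nonneg _).mpr
      ⟨fun n => (hnorm n).summable, ?_⟩)
    simpa only [Function.comp_apply, (hnorm _).tsum_eq] using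
      summable_geometric_of_lt_one (by positivity) h
  exact e.hasSum_iff.mp ((hasSum_geometric_of_norm_lt_one
    ((norm_add_le x y).trans_lt h)).sigma_of_hasSum
      (fun n => hasSum_antidiagonal_choose_mul_pow_mul_pow x y n) hsummable)

end BinomialSeries

section OddPart

variable {𝕜 : Type*} [RCLike 𝕜]

theorem one_sub_add_ne_zero {a b : 𝕜} (h : ‖a‖ + ‖b‖ < 1) : 1 - (a + b) ≠ 0 := by
  intro hab
  have := (norm_add_le a b).trans_lt h
  rw [← sub_eq_zero.mp hab, norm_one] at this
  exact this.false

theorem one_sub_two_mul_add_add_sq_eq (s t : 𝕜) :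
    1 - 2 * (s ^ 2 + t ^ 2) + (s ^ 2 - t ^ 2) ^ 2
      = (1 - (s + t)) * (1 - (-s + t)) * (1 - (s + -t)) * (1 - (-s + -t)) := by
  ring

theorem one_sub_two_mul_add_add_sq_ne_zero {s t : 𝕜} (h : ‖s‖ + ‖t‖ < 1) :
    1 - 2 * (s ^ 2 + t ^ 2) + (s ^ 2 - t ^ 2) ^ 2 ≠ 0 := by
  rw [one_sub_two_mul_add_add_sq_eq]
  refine mul_ne_zero (mul_ne_zero (mul_ne_zero ?_ ?_) ?_) ?_ <;>
    exact one_sub_add_ne_zero (by simpa using h)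

/-- Obtained by averaging `∑ (i+j choose i) s^i t^j = (1 - (s + t))⁻¹` over the sign changes
`(±s, ±t)`. -/
theorem hasSum_choose_mul_pow_odd_mul_pow_odd {s t : 𝕜} (h : ‖s‖ + ‖t‖ < 1) :
    HasSum (fun q : ℕ × ℕ =>
        ((2 * q.1 + 2 * q.2 + 2).choose (2 * q.1 + 1) : 𝕜) * s ^ (2 * q.1 + 1) * t ^ (2 * q.2 + 1))
      (2 * s * t / (1 - 2 * (s ^ 2 + t ^ 2) + (s ^ 2 - t ^ 2) ^ 2)) := by
  have h₁ : ‖-s‖ + ‖t‖ < 1 := by simpa using h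
  have h₂ : ‖s‖ + ‖-t‖ < 1 := by simpa using h
  have h₃ : ‖-s‖ + ‖-t‖ < 1 := by simpa using h
  have hsum := ((((hasSum_choose_mul_pow_mul_pow h).sub (hasSum_choose_mul_pow_mul_pow h₁)).sub
    (hasSum_choose_mul_pow_mul_pow h₂)).add (hasSum_choose_mul_pow_mul_pow h₃)).div_const 4
  let odd : ℕ × ℕ → ℕ × ℕ := fun q => (2 * q.1 + 1, 2 * q.2 + 1)
  have hodd : Function.Injective odd := fun q q' hq => by
    simp only [odd, Prod.mk.injEq] at hq
    exact Prod.ext (by omega) (by omega)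
  rw [← hodd.hasSum_iff] at hsum
  · convert hsum using 1
    · funext q
      simp only [odd, Function.comp_apply, (odd_two_mul_add_one _).neg_pow,
        show 2 * q.1 + 1 + (2 * q.2 + 1) = 2 * q.1 + 2 * q.2 + 2 by ring]
      ring
    · have h₀' := one_sub_add_ne_zero h
      have h₁' := one_sub_add_ne_zero h₁
      have h₂' := one_sub_add_ne_zero h₂
      have h₃' := one_sub_add_ne_zero h₃
      rw [one_sub_two_mul_add_add_sq_eq]
      field_simp
      ring
  · rintro ⟨i, j⟩ hij
    have hfactor : ∀ (a : 𝕜) (n : ℕ), Even n → a ^ n - (-a) ^ n = 0 := fun a n hn => by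
      rw [hn.neg_pow, sub_self]
    rcases Nat.even_or_odd i with hi | ⟨k, rfl⟩
    · linear_combination (((i + j).choose i : 𝕜) * (t ^ j - (-t) ^ j) / 4) * hfactor s i hi
    rcases Nat.even_or_odd j with hj | ⟨l, rfl⟩
    · linear_combination (((2 * k + 1 + j).choose (2 * k + 1) : 𝕜) *
        (s ^ (2 * k + 1) - (-s) ^ (2 * k + 1)) / 4) * hfactor t j hj
    exact absurd ⟨(k, l), rfl⟩ hij

end OddPart

noncomputable def yukawaCoeff : ℕ → ℕ → ℂ
  | 0, 0 => 3 / 8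
  | 0, _ + 1 => 0
  | a + 1, b => ((2 * a + 2 * b).choose (2 * a + 1) : ℂ)

theorem sq_mul_sq_mul_neg_sub_pow_two_mul (m : ℕ) (u v : ℂ) :
    u ^ 2 * v ^ 2 * (-u - v) ^ (2 * m)
      = ∑ k ∈ range (2 * m + 1), ((2 * m).choose k : ℂ) * u ^ (k + 2) * v ^ (2 * m - k + 2) := by
  rw [show -u - v = -(u + v) by ring, Even.neg_pow (even_two_mul m), add_pow, mul_sum]
  refine sum_congr rfl fun k _ => ?_
  ring

theorem iteratedDeriv_iteratedDeriv_integrand {d₁ d₂ m : ℕ} (hm : m + 1 = d₁ + d₂) (x y : ℂ) :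
    iteratedDeriv (2 * d₂ + 1) (fun u₂ : ℂ => iteratedDeriv (2 * d₁ + 1) (fun u₁ : ℂ =>
        u₁ ^ 2 * u₂ ^ 2 * (-u₁ - u₂) ^ (2 * (d₁ : ℤ) + 2 * (d₂ : ℤ) - 2)) x) y
      = (2 * d₁ + 1)! * (2 * d₂ + 1)! * yukawaCoeff d₁ d₂ := by
  have hexp : 2 * (d₁ : ℤ) + 2 * (d₂ : ℤ) - 2 = ((2 * m : ℕ) : ℤ) := by push_cast; omega
  simp_rw [hexp, zpow_natCast, sq_mul_sq_mul_neg_sub_pow_two_mul]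
  rw [iteratedDeriv_iteratedDeriv_homogeneous _ _ _ _
    (fun k hk => by have := mem_range.mp hk; omega)]
  congr 1
  rcases d₁ with _ | a
  · rcases d₂ with _ | b
    · omega
    · simp [yukawaCoeff]
  · have hk : ∀ k, k + 2 = 2 * (a + 1) + 1 ↔ k = 2 * a + 1 := fun k => by omega
    simp only [sum_filter, hk, sum_ite_eq', mem_range, yukawaCoeff,
      show 2 * m = 2 * a + 2 * d₂ by omega]
    split_ifs with h
    · rfl
    · rw [Nat.choose_eq_zero_of_lt (by omega), Nat.cast_zero]

theorem iteratedDeriv_iteratedDeriv_integrand_zero {x y : ℂ} (h : x + y ≠ 0) :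
    iteratedDeriv 1 (fun v : ℂ => iteratedDeriv 1 (fun u : ℂ =>
        u ^ 2 * v ^ 2 * (-u - v) ^ (-2 : ℤ)) x) y = 6 * x ^ 2 * y ^ 2 / (x + y) ^ 4 := by
  have inner : ∀ v : ℂ, x + v ≠ 0 →
      iteratedDeriv 1 (fun u : ℂ => u ^ 2 * v ^ 2 * (-u - v) ^ (-2 : ℤ)) x
        = 2 * x * v ^ 3 / (x + v) ^ 3 := by
    intro v hv
    have hf : (fun u : ℂ => u ^ 2 * v ^ 2 * (-u - v) ^ (-2 : ℤ))
        = fun u => v ^ 2 * u ^ 2 / (u + v) ^ 2 := by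
      funext u
      rw [zpow_neg, zpow_ofNat, show -u - v = -(u + v) by ring, neg_sq]
      ring
    have hd : HasDerivAt (fun u => v ^ 2 * u ^ 2 / (u + v) ^ 2)
        (2 * x * v ^ 3 / (x + v) ^ 3) x := by
      refine (((hasDerivAt_pow 2 x).const_mul (v ^ 2)).fun_div
        (((hasDerivAt_id' x).add_const v).fun_pow 2) (pow_ne_zero 2 hv)).congr_deriv ?_
      field_simp
      ring
    rw [iteratedDeriv_one, hf, hd.deriv]
  have houter : HasDerivAt (fun v => 2 * x * v ^ 3 / (x + v) ^ 3)
      (6 * x ^ 2 * y ^ 2 / (x + y) ^ 4) y := by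
    refine (((hasDerivAt_pow 3 y).const_mul (2 * x)).fun_div
      (((hasDerivAt_id' y).const_add x).fun_pow 3) (pow_ne_zero 3 h)).congr_deriv ?_
    field_simp
    ring
  have hev : (fun v => iteratedDeriv 1 (fun u : ℂ => u ^ 2 * v ^ 2 * (-u - v) ^ (-2 : ℤ)) x)
      =ᶠ[nhds y] fun v => 2 * x * v ^ 3 / (x + v) ^ 3 := by
    filter_upwards [(continuous_const.add continuous_id).continuousAt.eventually_ne h] with v hv
    exact inner v hv
  rw [iteratedDeriv_one, hev.deriv_eq, houter.deriv]

theorem residue_eq_yukawaCoeff {Λ : ℂ} (hΛ : Λ ≠ 0) (d₁ d₂ : ℕ) :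
    1 / (((2 * d₁ + 1)! : ℂ) * ((2 * d₂ + 1)! : ℂ)) *
      iteratedDeriv (2 * d₂ + 1) (fun u₂ : ℂ => iteratedDeriv (2 * d₁ + 1) (fun u₁ : ℂ =>
        u₁ ^ 2 * u₂ ^ 2 * (-u₁ - u₂) ^ (2 * (d₁ : ℤ) + 2 * (d₂ : ℤ) - 2)) Λ) Λ
      = yukawaCoeff d₁ d₂ := by
  rcases Nat.eq_zero_or_pos (d₁ + d₂) with h₀ | hpos
  · obtain ⟨rfl, rfl⟩ : d₁ = 0 ∧ d₂ = 0 := by omega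
    have h2Λ : Λ + Λ ≠ 0 := by rwa [← two_mul, mul_ne_zero_iff_left two_ne_zero]
    simp only [Nat.cast_zero, mul_zero, zero_add, zero_sub, Nat.factorial_one, Nat.cast_one,
      mul_one, div_one, one_mul, iteratedDeriv_iteratedDeriv_integrand_zero h2Λ, yukawaCoeff]
    field_simp
    ring
  · rw [iteratedDeriv_iteratedDeriv_integrand (m := d₁ + d₂ - 1) (by omega), one_div,
      inv_mul_cancel_left₀ (by simp [Nat.factorial_ne_zero])]

theorem hasSum_yukawaCoeff {s t : ℂ} (h : ‖s‖ + ‖t‖ < 1) :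
    HasSum (fun p : ℕ × ℕ => (s ^ 2) ^ p.1 * (t ^ 2) ^ p.2 * yukawaCoeff p.1 p.2)
      (3 / 8 + 2 * s ^ 2 * t ^ 2 / (1 - 2 * (s ^ 2 + t ^ 2) + (s ^ 2 - t ^ 2) ^ 2)) := by
  let shift : ℕ × ℕ → ℕ × ℕ := fun q => (q.1 + 1, q.2 + 1)
  have hshift : Function.Injective shift := fun q q' hq => by
    simp only [shift, Prod.mk.injEq] at hq
    exact Prod.ext (by omega) (by omega)
  have hrest : HasSum (fun p : ℕ × ℕ => (s ^ 2) ^ p.1 * (t ^ 2) ^ p.2 * yukawaCoeff p.1 p.2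
      - if p = (0, 0) then 3 / 8 else 0)
      (2 * s ^ 2 * t ^ 2 / (1 - 2 * (s ^ 2 + t ^ 2) + (s ^ 2 - t ^ 2) ^ 2)) := by
    rw [← hshift.hasSum_iff,
      show ∀ D : ℂ, 2 * s ^ 2 * t ^ 2 / D = s * t * (2 * s * t / D) from fun D => by ring]
    · refine ((hasSum_choose_mul_pow_odd_mul_pow_odd h).mul_left (s * t)).congr_fun fun q => ?_
      simp only [shift, Function.comp_apply, yukawaCoeff, Prod.mk.injEq, Nat.add_one_ne_zero,
        and_false, if_false, sub_zero, mul_add, mul_one, ← add_assoc]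
      ring
    · rintro ⟨_ | a, _ | b⟩ hp
      · simp [yukawaCoeff]
      · simp [yukawaCoeff]
      · simp [yukawaCoeff]
      · exact absurd ⟨(a, b), rfl⟩ hp
  rw [add_comm]
  simpa using hrest.add (hasSum_ite_eq ((0, 0) : ℕ × ℕ) (3 / 8 : ℂ))

theorem stmt16 (Λ : ℂ) (hΛ : Λ ≠ 0) (c : ℕ → ℕ → ℂ)
    (hc : ∀ d1 d2 : ℕ, c d1 d2 =
      (1 / (((2*d1+1)! : ℂ) * ((2*d2+1)! : ℂ))) *
      iteratedDeriv (2*d2+1) (fun u2 : ℂ =>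
        iteratedDeriv (2*d1+1) (fun u1 : ℂ =>
          u1^2 * u2^2 * ((-u1 - u2)^(2*(d1:ℤ)+2*(d2:ℤ)-2))) Λ) Λ) :
    ∀ z1 z2 : ℂ, ‖z1‖ < 1/100 → ‖z2‖ < 1/100 →
      HasSum (fun p : ℕ × ℕ => z1^p.1 * z2^p.2 * c p.1 p.2)
        ((3 - 6*(z1+z2) + 3*z1^2 + 10*z1*z2 + 3*z2^2) / (8*(1 - 2*(z1+z2) + (z1-z2)^2))) := by
  have hcoeff : ∀ d₁ d₂, c d₁ d₂ = yukawaCoeff d₁ d₂ := fun d₁ d₂ =>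
    (hc d₁ d₂).trans (residue_eq_yukawaCoeff hΛ d₁ d₂)
  intro z₁ z₂ h₁ h₂
  obtain ⟨s, rfl⟩ := IsAlgClosed.exists_pow_nat_eq z₁ two_pos
  obtain ⟨t, rfl⟩ := IsAlgClosed.exists_pow_nat_eq z₂ two_pos
  rw [norm_pow] at h₁ h₂
  have hst : ‖s‖ + ‖t‖ < 1 := by nlinarith [norm_nonneg s, norm_nonneg t, sq_nonneg (‖s‖ - ‖t‖)]
  have hΔ := one_sub_two_mul_add_add_sq_ne_zero hst
  simp only [hcoeff]
  convert hasSum_yukawaCoeff hst using 1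
  rw [div_add_div _ _ (by norm_num) hΔ, div_eq_div_iff (mul_ne_zero (by norm_num) hΔ)
    (mul_ne_zero (by norm_num) hΔ)]
  ring
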